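/- arXiv:1501.04354 — 9 statements merged into one kernel-verified Lean document; each statement's English description precedes it below -/
import Mathlib

section
/- For every type A there is exactly one function e : Stream' A → Stream' A satisfying e (x :: y :: t) = x :: e t for all x, y : A and t : Stream' A; moreover this unique function is given by (e s).get n = s.get (2 * n) for all s and n. -/
private lemma even_key {A : Type*} (e : Stream' A → Stream' A)
    (h : ∀ (x y : A) (t : Stream' A),
      e (Stream'.cons x (Stream'.cons y t)) = Stream'.cons x (e t)) :
    ∀ (n : ℕ) (s : Stream' A), (e s).get n = s.get (2 * n) := by
  intro n
  induction n with
  | zero =>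
      intro s
      have hs : s = Stream'.cons s.head (Stream'.cons s.tail.head s.tail.tail) := by
        rw [Stream'.eta, Stream'.eta]
      rw [hs, h]
      rfl
  | succ n ih =>
      intro s
      have hs : s = Stream'.cons s.head (Stream'.cons s.tail.head s.tail.tail) := by
        rw [Stream'.eta, Stream'.eta]
      rw [hs, h]
      show (e s.tail.tail).get n = _
      rw [ih]
      have h2 : 2 * (n + 1) = (2 * n + 1) + 1 := by ring
      rw [h2]
      simp [Stream'.get, Stream'.tail, Stream'.cons]

/-- The paper's corecursive `even` on streams: there is exactly one function
`e` with `e (x :: y :: t) = x :: e t`, and it satisfies `(e s).get n = s.get (2 * n)`. -/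
theorem stmt0 (A : Type*) :
    (∃! e : Stream' A → Stream' A,
        ∀ (x y : A) (t : Stream' A),
          e (Stream'.cons x (Stream'.cons y t)) = Stream'.cons x (e t)) ∧
    (∀ e : Stream' A → Stream' A,
        (∀ (x y : A) (t : Stream' A),
          e (Stream'.cons x (Stream'.cons y t)) = Stream'.cons x (e t)) →
        ∀ (s : Stream' A) (n : ℕ), (e s).get n = s.get (2 * n)) := by
  constructor
  · refine ⟨fun s n => s.get (2 * n), ?_, ?_⟩
    · intro x y t
      funext n
      cases n with
      | zero => rfl
      | succ m =>
          show Stream'.get (Stream'.cons x (Stream'.cons y t)) (2 * (m + 1)) = _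
          have : 2 * (m + 1) = (2 * m + 1) + 1 := by ring
          rw [this]
          simp [Stream'.get, Stream'.cons, Stream'.tail]
    · intro e he
      funext s n
      exact even_key e he n s
  · intro e he s n
    exact even_key e he n s
end

section
/- There is exactly one function mg : Stream' ℕ → Stream' ℕ → Stream' ℕ satisfying mg (x :: t₁) (y :: t₂) = (if x ≤ y then x :: mg t₁ (y :: t₂) else y :: mg (x :: t₁) t₂) for all x, y : ℕ and t₁, t₂ : Stream' ℕ. -/
private def mgAux : Stream' ℕ × Stream' ℕ → Stream' ℕ :=
  Stream'.corec (fun p => min p.1.head p.2.head)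
    (fun p => if p.1.head ≤ p.2.head then (p.1.tail, p.2) else (p.1, p.2.tail))

private lemma mgAux_eq (x y : ℕ) (t₁ t₂ : Stream' ℕ) :
    mgAux (Stream'.cons x t₁, Stream'.cons y t₂) =
      (if x ≤ y then Stream'.cons x (mgAux (t₁, Stream'.cons y t₂))
       else Stream'.cons y (mgAux (Stream'.cons x t₁, t₂))) := by
  unfold mgAux
  rw [Stream'.corec_eq]
  by_cases h : x ≤ y <;>
    simp [h, Stream'.head_cons, Stream'.tail_cons, min_def, le_of_not_ge]

/-- The paper's corecursive order-merging function `merge` on streams of naturals: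
there is exactly one function `mg` satisfying the given equation. -/
theorem stmt2 :
    ∃! mg : Stream' ℕ → Stream' ℕ → Stream' ℕ,
      ∀ (x y : ℕ) (t₁ t₂ : Stream' ℕ),
        mg (Stream'.cons x t₁) (Stream'.cons y t₂) =
          (if x ≤ y then Stream'.cons x (mg t₁ (Stream'.cons y t₂))
           else Stream'.cons y (mg (Stream'.cons x t₁) t₂)) := by
  refine ⟨fun s₁ s₂ => mgAux (s₁, s₂), fun x y t₁ t₂ => mgAux_eq x y t₁ t₂, ?_⟩
  intro f hf
  funext s₁ s₂
  apply Stream'.ext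
  intro n
  induction n using Nat.strong_induction_on generalizing s₁ s₂ with
  | _ n ih =>
    rw [← Stream'.eta s₁, ← Stream'.eta s₂, hf, mgAux_eq]
    by_cases h : s₁.head ≤ s₂.head <;> simp only [h, if_true, if_false]
    all_goals
      cases n with
      | zero => simp [Stream'.get_zero_cons]
      | succ n =>
          rw [Stream'.get_succ_cons, Stream'.get_succ_cons]
          exact ih n (Nat.lt_succ_self n) _ _
end

section
/- Let A be a type, and suppose e : Stream' A → Stream' A satisfies e (x :: y :: t) = x :: e t for all x, y, t, and z : Stream' A → Stream' A → Stream' A satisfies z (x :: t) s = x :: z s t for all x, t, s. Then for every stream t : Stream' A, z (e t) (e (Stream'.tail t)) = t. -/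
/-- `zip (even t) (even (tail t)) = t` for the paper's corecursively defined
`even` and `zip` functions on streams. -/
theorem stmt3 (A : Type*) (e : Stream' A → Stream' A)
    (he : ∀ (x y : A) (t : Stream' A),
      e (Stream'.cons x (Stream'.cons y t)) = Stream'.cons x (e t))
    (z : Stream' A → Stream' A → Stream' A)
    (hz : ∀ (x : A) (t s : Stream' A),
      z (Stream'.cons x t) s = Stream'.cons x (z s t)) :
    ∀ t : Stream' A, z (e t) (e (Stream'.tail t)) = t := by
  have key : ∀ t : Stream' A,
      z (e t) (e t.tail) = Stream'.cons t.head (z (e t.tail) (e t.tail.tail)) := by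
    intro t
    conv_lhs => rw [← t.eta, ← t.tail.eta, he, Stream'.tail_cons, hz]
    rw [t.tail.eta]
  intro t
  apply Stream'.ext
  intro n
  induction n generalizing t with
  | zero => rw [key]; simp
  | succ n ih => rw [key, Stream'.get_succ_cons, ih, Stream'.get_succ]
end

section
/- Suppose e : Stream' ℕ → Stream' ℕ satisfies e (x :: y :: t) = x :: e t for all x, y, t; z : Stream' ℕ → Stream' ℕ → Stream' ℕ satisfies z (x :: t) s = x :: z s t for all x, t, s; and a : Stream' ℕ → Stream' ℕ → Stream' ℕ satisfies a (x :: t) (y :: s) = (x + y) :: a t s for all x, y, t, s. Then there exists exactly one stream D : Stream' ℕ such that D = 0 :: 1 :: 1 :: z (a (Stream'.tail D) (Stream'.tail (Stream'.tail D))) (e (Stream'.tail D)). -/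
private def dd : ℕ → ℕ
  | 0 => 0
  | 1 => 1
  | 2 => 1
  | (n+3) => if n % 2 = 0 then dd (n/2+1) + dd (n/2+2) else dd n
decreasing_by all_goals omega

/-- The paper's non-guarded corecursive specification of the stream `D`:
`D = 0 :: 1 :: 1 :: zip (add (tl D) (tl (tl D))) (even (tl D))` has exactly
one solution. -/
theorem stmt4 (e : Stream' ℕ → Stream' ℕ)
    (he : ∀ (x y : ℕ) (t : Stream' ℕ),
      e (Stream'.cons x (Stream'.cons y t)) = Stream'.cons x (e t))
    (z : Stream' ℕ → Stream' ℕ → Stream' ℕ)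
    (hz : ∀ (x : ℕ) (t s : Stream' ℕ),
      z (Stream'.cons x t) s = Stream'.cons x (z s t))
    (a : Stream' ℕ → Stream' ℕ → Stream' ℕ)
    (ha : ∀ (x y : ℕ) (t s : Stream' ℕ),
      a (Stream'.cons x t) (Stream'.cons y s) = Stream'.cons (x + y) (a t s)) :
    ∃! D : Stream' ℕ,
      D = Stream'.cons 0 (Stream'.cons 1 (Stream'.cons 1
        (z (a (Stream'.tail D) (Stream'.tail (Stream'.tail D)))
           (e (Stream'.tail D))))) := by
  have hE : ∀ (n : ℕ) (u : Stream' ℕ), (e u).get n = u.get (2*n) := by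
    intro n
    induction n with
    | zero =>
      intro u
      conv_lhs => rw [← Stream'.eta u, ← Stream'.eta u.tail, he]
      simp
    | succ n ih =>
      intro u
      conv_lhs => rw [← Stream'.eta u, ← Stream'.eta u.tail, he]
      rw [Stream'.get_succ_cons, ih]
      simp only [Stream'.get_tail]
      congr 1
  have hA : ∀ (n : ℕ) (u v : Stream' ℕ), (a u v).get n = u.get n + v.get n := by
    intro n
    induction n with
    | zero =>
      intro u v
      conv_lhs => rw [← Stream'.eta u, ← Stream'.eta v, ha]
      simp
    | succ n ih =>
      intro u v
      conv_lhs => rw [← Stream'.eta u, ← Stream'.eta v, ha]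
      rw [Stream'.get_succ_cons, ih]
      simp [Stream'.get_tail]
  have hZ : ∀ (n : ℕ) (u v : Stream' ℕ),
      (z u v).get (2*n) = u.get n ∧ (z u v).get (2*n+1) = v.get n := by
    intro n
    induction n with
    | zero =>
      intro u v
      constructor
      · conv_lhs => rw [← Stream'.eta u, hz]
        simp
      · conv_lhs => rw [← Stream'.eta u, hz]
        rw [show (2*0+1) = 0+1 from rfl, Stream'.get_succ_cons]
        conv_lhs => rw [← Stream'.eta v, hz]
        simp
    | succ n ih =>
      intro u v
      constructor
      · rw [show 2*(n+1) = (2*n+1)+1 by ring]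
        conv_lhs => rw [← Stream'.eta u, hz]
        rw [Stream'.get_succ_cons, (ih v u.tail).2]
        simp [Stream'.get_tail]
      · rw [show 2*(n+1)+1 = (2*n+1)+1+1 by ring]
        conv_lhs => rw [← Stream'.eta u, hz]
        rw [Stream'.get_succ_cons]
        conv_lhs => rw [← Stream'.eta v, hz]
        rw [Stream'.get_succ_cons, (ih u.tail v.tail).2]
        simp [Stream'.get_tail]
  -- characterization of solutions
  have spec : ∀ X : Stream' ℕ,
      X = Stream'.cons 0 (Stream'.cons 1 (Stream'.cons 1
        (z (a (Stream'.tail X) (Stream'.tail (Stream'.tail X)))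
           (e (Stream'.tail X))))) →
      X.get 0 = 0 ∧ X.get 1 = 1 ∧ X.get 2 = 1 ∧
      (∀ k, X.get (2*k+3) = X.get (k+1) + X.get (k+2)) ∧
      (∀ k, X.get (2*k+4) = X.get (2*k+1)) := by
    intro X hX
    have hm : ∀ m, X.get (m+3) =
        (z (a (Stream'.tail X) (Stream'.tail (Stream'.tail X)))
           (e (Stream'.tail X))).get m := by
      intro m
      conv_lhs => rw [hX]
      rw [show m+3 = m+1+1+1 from rfl, Stream'.get_succ_cons,
        Stream'.get_succ_cons, Stream'.get_succ_cons]
    refine ⟨?_, ?_, ?_, ?_, ?_⟩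
    · conv_lhs => rw [hX]; simp
    · conv_lhs => rw [hX]
      rw [show (1:ℕ) = 0+1 from rfl, Stream'.get_succ_cons]; simp
    · conv_lhs => rw [hX]
      rw [show (2:ℕ) = 0+1+1 from rfl, Stream'.get_succ_cons,
        Stream'.get_succ_cons]; simp
    · intro k
      rw [show 2*k+3 = (2*k)+3 from rfl, hm, (hZ k _ _).1, hA]
      simp [Stream'.get_tail]
    · intro k
      rw [show 2*k+4 = (2*k+1)+3 by ring, hm, (hZ k _ _).2, hE]
      rw [Stream'.get_tail]
  -- existence
  have hDget : ∀ n, Stream'.get (dd : Stream' ℕ) n = dd n := fun _ => rfl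
  have hex : (dd : Stream' ℕ) = Stream'.cons 0 (Stream'.cons 1 (Stream'.cons 1
        (z (a (Stream'.tail (dd : Stream' ℕ))
              (Stream'.tail (Stream'.tail (dd : Stream' ℕ))))
           (e (Stream'.tail (dd : Stream' ℕ)))))) := by
    apply Stream'.ext
    intro n
    match n with
    | 0 => rw [hDget]; simp [dd]
    | 1 =>
      rw [hDget, show (1:ℕ) = 0+1 from rfl, Stream'.get_succ_cons]
      simp [dd]
    | 2 =>
      rw [hDget, show (2:ℕ) = 0+1+1 from rfl, Stream'.get_succ_cons,
        Stream'.get_succ_cons]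
      simp [dd]
    | (m+3) =>
      rw [hDget, show m+3 = m+1+1+1 from rfl, Stream'.get_succ_cons,
        Stream'.get_succ_cons, Stream'.get_succ_cons]
      obtain ⟨k, hk | hk⟩ : ∃ k, m = 2*k ∨ m = 2*k+1 := ⟨m/2, by omega⟩
      · subst hk
        rw [(hZ k _ _).1, hA]
        simp only [Stream'.get_tail, hDget]
        show dd (2*k+1+1+1) = _
        rw [show 2*k+1+1+1 = (2*k)+3 by ring, dd]
        have h1 : (2*k) % 2 = 0 := by omega
        have h2 : (2*k)/2 = k := by omega
        simp [h1, h2]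
        rfl
      · subst hk
        rw [(hZ k _ _).2, hE]
        show dd (2*k+1+1+1+1) = dd (2*k+1)
        rw [show 2*k+1+1+1+1 = (2*k+1)+3 by ring, dd]
        have h1 : ¬ ((2*k+1) % 2 = 0) := by omega
        simp [h1]
  refine ⟨(dd : Stream' ℕ), hex, ?_⟩
  intro Y hY
  have hXs := spec _ hY
  have hDs := spec _ hex
  apply Stream'.ext
  intro n
  induction n using Nat.strong_induction_on with
  | _ n ih =>
    rcases n with _ | _ | _ | m
    · rw [hXs.1, hDs.1]
    · rw [hXs.2.1, hDs.2.1]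
    · rw [hXs.2.2.1, hDs.2.2.1]
    · obtain ⟨k, hk | hk⟩ : ∃ k, m+3 = 2*k+3 ∨ m+3 = 2*k+4 := ⟨m/2, by omega⟩
      · rw [hk, hXs.2.2.2.1, hDs.2.2.2.1, ih (k+1) (by omega), ih (k+2) (by omega)]
      · rw [hk, hXs.2.2.2.2, hDs.2.2.2.2, ih (2*k+1) (by omega)]
end

section
/- Let Q₁ := {s : Stream' Bool // ∀ n, ∃ m, n ≤ m ∧ s.get m = true} be the set of Boolean streams containing infinitely many occurrences of true. Then there exists exactly one function f : Q₁ → Stream' Bool such that for every t ∈ Q₁ (note that false :: t ∈ Q₁ and true :: t ∈ Q₁): f (false :: t) = f t and f (true :: t) = true :: f t. -/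
/-- The paper's function erasing all `false` entries from a Boolean stream that
contains infinitely many `true` entries: there is exactly one such function
satisfying the two corecursive equations. -/
theorem stmt6 :
    ∃! f : {s : Stream' Bool // ∀ n, ∃ m, n ≤ m ∧ s.get m = true} → Stream' Bool,
      ∀ (t : Stream' Bool) (ht : ∀ n, ∃ m, n ≤ m ∧ t.get m = true)
        (hft : ∀ n, ∃ m, n ≤ m ∧ (Stream'.cons false t).get m = true)
        (htt : ∀ n, ∃ m, n ≤ m ∧ (Stream'.cons true t).get m = true),
        f ⟨Stream'.cons false t, hft⟩ = f ⟨t, ht⟩ ∧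
        f ⟨Stream'.cons true t, htt⟩ = Stream'.cons true (f ⟨t, ht⟩) := by
  refine ⟨fun _ => Stream'.const true, fun t ht hft htt => ⟨rfl, Stream'.const_eq true⟩, ?_⟩
  intro g hg
  have tailmem : ∀ (s : Stream' Bool), (∀ n, ∃ m, n ≤ m ∧ s.get m = true) →
      ∀ n, ∃ m, n ≤ m ∧ s.tail.get m = true := by
    intro s hs n
    obtain ⟨m, hm, htr⟩ := hs (n + 1)
    match m, hm with
    | Nat.succ k, hm => exact ⟨k, by omega, htr⟩
  have consmem : ∀ (b : Bool) (s : Stream' Bool), (∀ n, ∃ m, n ≤ m ∧ s.get m = true) →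
      ∀ n, ∃ m, n ≤ m ∧ (Stream'.cons b s).get m = true := by
    intro b s hs n
    obtain ⟨m, hm, htr⟩ := hs n
    exact ⟨m + 1, by omega, by rwa [Stream'.get_succ_cons]⟩
  have step : ∀ (m : ℕ) (s : Stream' Bool) (hs : ∀ n, ∃ m, n ≤ m ∧ s.get m = true),
      s.get m = true → ∃ (s' : Stream' Bool) (hs' : ∀ n, ∃ m, n ≤ m ∧ s'.get m = true),
        g ⟨s, hs⟩ = Stream'.cons true (g ⟨s', hs'⟩) := by
    intro m
    induction m with
    | zero =>
      intro s hs h0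
      have hseq : s = Stream'.cons true s.tail := by
        conv_lhs => rw [← Stream'.eta s]
        rw [show s.head = true from h0]
      refine ⟨s.tail, tailmem s hs, ?_⟩
      have := (hg s.tail (tailmem s hs) (consmem false s.tail (tailmem s hs))
        (hseq ▸ hs)).2
      calc g ⟨s, hs⟩ = g ⟨Stream'.cons true s.tail, hseq ▸ hs⟩ := by
            exact congrArg g (Subtype.ext hseq)
        _ = Stream'.cons true (g ⟨s.tail, tailmem s hs⟩) := this
    | succ k ih =>
      intro s hs h
      cases h0 : s.head with
      | true =>
        have hseq : s = Stream'.cons true s.tail := by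
          conv_lhs => rw [← Stream'.eta s]
          rw [h0]
        refine ⟨s.tail, tailmem s hs, ?_⟩
        have := (hg s.tail (tailmem s hs) (consmem false s.tail (tailmem s hs))
          (hseq ▸ hs)).2
        calc g ⟨s, hs⟩ = g ⟨Stream'.cons true s.tail, hseq ▸ hs⟩ := by
              exact congrArg g (Subtype.ext hseq)
          _ = Stream'.cons true (g ⟨s.tail, tailmem s hs⟩) := this
      | false =>
        have hseq : s = Stream'.cons false s.tail := by
          conv_lhs => rw [← Stream'.eta s]
          rw [h0]
        have htail : s.tail.get k = true := by
          rw [Stream'.get_tail]; exact h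
        obtain ⟨s', hs', he⟩ := ih s.tail (tailmem s hs) htail
        refine ⟨s', hs', ?_⟩
        have := (hg s.tail (tailmem s hs) (hseq ▸ hs)
          (consmem true s.tail (tailmem s hs))).1
        calc g ⟨s, hs⟩ = g ⟨Stream'.cons false s.tail, hseq ▸ hs⟩ := by
              exact congrArg g (Subtype.ext hseq)
          _ = g ⟨s.tail, tailmem s hs⟩ := this
          _ = Stream'.cons true (g ⟨s', hs'⟩) := he
  have allTrue : ∀ (n : ℕ) (s : Stream' Bool) (hs : ∀ n, ∃ m, n ≤ m ∧ s.get m = true),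
      (g ⟨s, hs⟩).get n = true := by
    intro n
    induction n with
    | zero =>
      intro s hs
      obtain ⟨m, _, hm⟩ := hs 0
      obtain ⟨s', hs', he⟩ := step m s hs hm
      rw [he]; rfl
    | succ k ih =>
      intro s hs
      obtain ⟨m, _, hm⟩ := hs 0
      obtain ⟨s', hs', he⟩ := step m s hs hm
      rw [he, Stream'.get_succ_cons]
      exact ih s' hs'
  funext s
  obtain ⟨s, hs⟩ := s
  exact Stream'.ext fun n => (allTrue n s hs).trans rfl
end

section
/- Suppose mg : Stream' ℕ → Stream' ℕ → Stream' ℕ satisfies mg (x :: t₁) (y :: t₂) = (if x ≤ y then x :: mg t₁ (y :: t₂) else y :: mg (x :: t₁) t₂) for all x, y, t₁, t₂. If s, s' : Stream' ℕ agree on their first n entries (s.get i = s'.get i for all i < n) and t, t' : Stream' ℕ agree on their first m entries, then mg s t and mg s' t' agree on their first min n m entries. -/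
/-- The production function of the order-merging function: if `s, s'` agree on their
first `n` entries and `t, t'` agree on their first `m` entries, then `mg s t` and
`mg s' t'` agree on their first `min n m` entries. -/
theorem stmt7 (mg : Stream' ℕ → Stream' ℕ → Stream' ℕ)
    (hmg : ∀ (x y : ℕ) (t₁ t₂ : Stream' ℕ),
      mg (Stream'.cons x t₁) (Stream'.cons y t₂) =
        (if x ≤ y then Stream'.cons x (mg t₁ (Stream'.cons y t₂))
         else Stream'.cons y (mg (Stream'.cons x t₁) t₂)))
    (n m : ℕ) (s s' t t' : Stream' ℕ)
    (hs : ∀ i < n, s.get i = s'.get i)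
    (ht : ∀ i < m, t.get i = t'.get i) :
    ∀ i < min n m, (mg s t).get i = (mg s' t').get i := by
  intro i
  induction i generalizing n m s s' t t' with
  | zero =>
    intro h
    obtain ⟨hn, hm⟩ := lt_min_iff.mp h
    have e1 : s.head = s'.head := hs 0 hn
    have e2 : t.head = t'.head := ht 0 hm
    rw [← Stream'.eta s, ← Stream'.eta s', ← Stream'.eta t, ← Stream'.eta t', hmg, hmg,
      e1, e2]
    split <;> simp
  | succ i ih =>
    intro h
    obtain ⟨hn, hm⟩ := lt_min_iff.mp h
    have e1 : s.head = s'.head := hs 0 (Nat.lt_of_le_of_lt (Nat.zero_le _) hn)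
    have e2 : t.head = t'.head := ht 0 (Nat.lt_of_le_of_lt (Nat.zero_le _) hm)
    rw [← Stream'.eta s, ← Stream'.eta s', ← Stream'.eta t, ← Stream'.eta t', hmg, hmg,
      e1, e2]
    split
    · rw [Stream'.get_succ_cons, Stream'.get_succ_cons]
      refine ih (n - 1) m s.tail s'.tail _ _ ?_ ?_ ?_
      · intro j hj
        have : j + 1 < n := by omega
        exact hs (j + 1) this
      · intro j hj
        cases j with
        | zero => rfl
        | succ k =>
          rw [Stream'.get_succ_cons, Stream'.get_succ_cons]
          exact ht (k + 1) hj
      · omega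
    · rw [Stream'.get_succ_cons, Stream'.get_succ_cons]
      refine ih n (m - 1) _ _ t.tail t'.tail ?_ ?_ ?_
      · intro j hj
        cases j with
        | zero => rfl
        | succ k =>
          rw [Stream'.get_succ_cons, Stream'.get_succ_cons]
          exact hs (k + 1) hj
      · intro j hj
        have : j + 1 < m := by omega
        exact ht (j + 1) this
      · omega
end

section
/- Let m : ℕ with 0 < m, and let η : (Fin m → ℕ∞) → ℕ∞ be monotone and continuous, i.e., η (sSup D) = sSup (η '' D) for every nonempty directed set D ⊆ (Fin m → ℕ∞). Suppose that for every n : Fin m → ℕ∞ with n i < ⊤ for all i, we have η n > ⨅ i, n i. Then for every n : Fin m → ℕ∞ such that n k < ⊤ for some k, we have η n > ⨅ i, n i. -/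
/-- If a continuous monotone `η : (Fin m → ℕ∞) → ℕ∞` satisfies
`η n > ⨅ i, n i` on tuples of finite values, then it satisfies it on every
tuple with at least one finite coordinate. -/
theorem stmt9 (m : ℕ) (hm : 0 < m) (η : (Fin m → ℕ∞) → ℕ∞) (hmono : Monotone η)
    (hcont : ∀ D : Set (Fin m → ℕ∞), D.Nonempty → DirectedOn (· ≤ ·) D →
      η (sSup D) = sSup (η '' D))
    (hstrict : ∀ n : Fin m → ℕ∞, (∀ i, n i < ⊤) → (⨅ i, n i) < η n) :
    ∀ n : Fin m → ℕ∞, (∃ k, n k < ⊤) → (⨅ i, n i) < η n := by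
  rintro n ⟨k, hk⟩
  haveI : Nonempty (Fin m) := ⟨⟨0, hm⟩⟩
  have hne : (⨅ i, n i) ≠ ⊤ := fun h =>
    absurd (h ▸ iInf_le n k) (not_le.mpr hk)
  obtain ⟨c, hc⟩ := WithTop.ne_top_iff_exists.mp hne
  set n' : Fin m → ℕ∞ := fun _ => (c : ℕ∞) with hn'
  have hle : n' ≤ n := fun i => hc.le.trans (iInf_le n i)
  have hfin : ∀ i, n' i < ⊤ := fun i => WithTop.coe_lt_top c
  have hinf : (⨅ i, n' i) = ⨅ i, n i := by
    rw [hn', iInf_const]; exact hc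
  calc (⨅ i, n i) = ⨅ i, n' i := hinf.symm
    _ < η n' := hstrict n' hfin
    _ ≤ η n := hmono hle
end

section
/- Let S be a nonempty type, let A be a CPO (a partial order with least element ⊥ in which every nonempty directed subset has a least upper bound), and let s : A → Ordinal. Let F : (S → A) → (S → A) be monotone with respect to the pointwise order, and suppose that for every g : S → A such that g x is not a maximal element of A for some x ∈ S, one has ⨅ x, s (F g x) > ⨅ x, s (g x). Then F has exactly one fixpoint, and this fixpoint h satisfies that h x is a maximal element of A for every x ∈ S. -/
noncomputable def stmt12Iter {S A : Type*} [CompletePartialOrder A] [OrderBot A]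
    (F : (S → A) → (S → A)) : Ordinal → (S → A) := fun o =>
  Ordinal.limitRecOn o ⊥ (fun _ ih => F ih)
    (fun o _ ih x => ⨆ p : Set.Iio o, ih p.1 p.2 x)

theorem stmt12Iter_zero {S A : Type*} [CompletePartialOrder A] [OrderBot A]
    (F : (S → A) → (S → A)) : stmt12Iter F 0 = ⊥ :=
  Ordinal.limitRecOn_zero _ _ _

theorem stmt12Iter_succ {S A : Type*} [CompletePartialOrder A] [OrderBot A]
    (F : (S → A) → (S → A)) (o : Ordinal) :
    stmt12Iter F (Order.succ o) = F (stmt12Iter F o) :=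
  Ordinal.limitRecOn_succ _ _ _ _

theorem stmt12Iter_limit {S A : Type*} [CompletePartialOrder A] [OrderBot A]
    (F : (S → A) → (S → A)) {o : Ordinal} (ho : Order.IsSuccLimit o) :
    stmt12Iter F o = fun x => ⨆ p : Set.Iio o, stmt12Iter F p.1 x :=
  Ordinal.limitRecOn_limit _ _ _ _ ho

theorem stmt12Iter_key {S A : Type*} [CompletePartialOrder A] [OrderBot A]
    (F : (S → A) → (S → A)) (hF : Monotone F) (o : Ordinal) :
    (∀ o' < o, stmt12Iter F o' ≤ stmt12Iter F o) ∧
    stmt12Iter F o ≤ F (stmt12Iter F o) ∧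
    ∀ h : S → A, F h = h → stmt12Iter F o ≤ h := by
  induction o using Ordinal.induction with
  | h o IH =>
    have mono : ∀ a b : Ordinal, a ≤ b → b < o → stmt12Iter F a ≤ stmt12Iter F b := by
      intro a b hab hb
      rcases lt_or_eq_of_le hab with h | h
      · exact (IH b hb).1 a h
      · exact h ▸ le_rfl
    rcases Ordinal.zero_or_succ_or_isSuccLimit o with h0 | ⟨a, rfl⟩ | hlim
    · subst h0
      refine ⟨fun o' ho' => absurd ho' (zero_le (a := o')).not_gt, ?_, ?_⟩
      · rw [stmt12Iter_zero]; exact bot_le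
      · intro h _; rw [stmt12Iter_zero]; exact bot_le
    · have ha : a < Order.succ a := Order.lt_succ a
      have IHa := IH a ha
      rw [stmt12Iter_succ]
      refine ⟨?_, hF IHa.2.1, ?_⟩
      · intro o' ho'
        have : o' ≤ a := Order.lt_succ_iff.mp ho'
        exact le_trans (mono o' a this ha) IHa.2.1
      · intro h hh
        calc F (stmt12Iter F a) ≤ F h := hF (IHa.2.2 h hh)
        _ = h := hh
    · have hdir : ∀ x : S, Directed (· ≤ ·)
          (fun p : Set.Iio o => stmt12Iter F p.1 x) := by
        intro x p q
        rcases le_total p.1 q.1 with h | h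
        · exact ⟨q, mono p.1 q.1 h q.2 x, le_rfl⟩
        · exact ⟨p, le_rfl, mono q.1 p.1 h p.2 x⟩
      rw [stmt12Iter_limit F hlim]
      refine ⟨?_, ?_, ?_⟩
      · intro o' ho' x
        exact (hdir x).le_iSup ⟨o', ho'⟩
      · intro x
        refine (hdir x).iSup_le fun p => ?_
        have h1 : stmt12Iter F p.1 ≤ F (stmt12Iter F p.1) := (IH p.1 p.2).2.1
        have h2 : stmt12Iter F p.1 ≤ fun x => ⨆ q : Set.Iio o, stmt12Iter F q.1 x :=
          fun y => (hdir y).le_iSup p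
        exact le_trans (h1 x) (hF h2 x)
      · intro h hh x
        exact (hdir x).iSup_le fun p => (IH p.1 p.2).2.2 h hh x

/-- Lemma on unique fixpoints: if a monotone `F : (S → A) → (S → A)` strictly
increases the minimal size `⨅ x, s (g x)` on every non-maximal `g`, then `F`
has exactly one fixpoint, and that fixpoint takes only maximal values. -/
theorem stmt12 {S A : Type*} [Nonempty S] [CompletePartialOrder A] [OrderBot A]
    (s : A → Ordinal) (F : (S → A) → (S → A)) (hF : Monotone F)
    (hsize : ∀ g : S → A, (∃ x, ¬ IsMax (g x)) →
      (⨅ x, s (g x)) < ⨅ x, s (F g x)) :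
    (∃! h : S → A, F h = h) ∧
    ∀ h : S → A, F h = h → ∀ x, IsMax (h x) := by
  -- every fixpoint is pointwise maximal
  have hmax : ∀ h : S → A, F h = h → ∀ x, IsMax (h x) := by
    intro h hh x
    by_contra hx
    have := hsize h ⟨x, hx⟩
    rw [hh] at this
    exact lt_irrefl _ this
  -- existence of a fixpoint via transfinite iteration
  have hninj : ¬ Function.Injective (stmt12Iter F) := not_injective_of_ordinal.{max u_1 u_2} _
  rw [Function.not_injective_iff] at hninj
  obtain ⟨a, b, heq, hne⟩ := hninj
  wlog hab : a < b generalizing a b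
  · exact this b a heq.symm hne.symm ((hne.lt_or_gt).resolve_left hab)
  have key := stmt12Iter_key F hF
  have h1 : stmt12Iter F a ≤ stmt12Iter F (Order.succ a) :=
    (key (Order.succ a)).1 a (Order.lt_succ a)
  have h2 : stmt12Iter F (Order.succ a) ≤ stmt12Iter F b := by
    rcases lt_or_eq_of_le (Order.succ_le_of_lt hab) with h | h
    · exact (key b).1 _ h
    · exact h ▸ le_rfl
  have hfix : F (stmt12Iter F a) = stmt12Iter F a := by
    have h3 : stmt12Iter F (Order.succ a) = stmt12Iter F a :=
      le_antisymm (heq ▸ h2) h1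
    rw [stmt12Iter_succ] at h3
    exact h3
  set h₀ := stmt12Iter F a with hh₀
  refine ⟨⟨h₀, hfix, ?_⟩, hmax⟩
  intro h hh
  have hle : h₀ ≤ h := (key a).2.2 h hh
  exact le_antisymm (fun x => hmax h₀ hfix x (hle x)) hle
end

section
/- Let ⟨B, ζ, s, cut⟩ be a sized CPO, and let Bmax := {b : B // IsMax b} be its set of maximal elements. Let S be a nonempty type, m : ℕ, h : S → (Fin m → Bmax) → Bmax, and g : Fin m → S → S. Suppose that for every x ∈ S there is a function η_x : (Fin m → Ordinal) → Ordinal which is an x-local prefix production function for h: there exists a monotone, maximal-element-preserving map h*_x : (Fin m → B) → B that agrees with h x on tuples of maximal elements and satisfies s (h*_x b) = η_x (fun i => s (b i)) for every b : Fin m → B. Assume moreover that η_x α > ⨅ i, α i whenever α : Fin m → Ordinal satisfies α i ≤ ζ for all i and α k < ζ for some k. Then there exists exactly one function f : S → Bmax satisfying f x = h x (fun i => f (g i x)) for all x ∈ S. -/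
section Aux13

variable {B : Type*} [CompletePartialOrder B] [OrderBot B] {S : Type*} {m : ℕ}

/-- Transfinite iteration of the corecursive operator from `⊥`. -/
noncomputable def approx13 (hstar : S → (Fin m → B) → B) (g : Fin m → S → S) :
    Ordinal → S → B :=
  Ordinal.lt_wf.fix fun α rec x =>
    hstar x fun i => sSup (Set.range fun β : Set.Iio α => rec β.1 β.2 (g i x))

/-- Supremum of all earlier approximations. -/
noncomputable def prev13 (hstar : S → (Fin m → B) → B) (g : Fin m → S → S)
    (α : Ordinal) (y : S) : B :=
  sSup (Set.range fun β : Set.Iio α => approx13 hstar g β.1 y)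

theorem approx13_def (hstar : S → (Fin m → B) → B) (g : Fin m → S → S)
    (α : Ordinal) (x : S) :
    approx13 hstar g α x = hstar x fun i => prev13 hstar g α (g i x) := by
  unfold approx13
  rw [WellFounded.fix_eq]
  rfl

theorem approx13_mono {hstar : S → (Fin m → B) → B} {g : Fin m → S → S}
    (hmono : ∀ x, Monotone (hstar x)) :
    ∀ α β : Ordinal, β ≤ α → ∀ x, approx13 hstar g β x ≤ approx13 hstar g α x := by
  intro α
  induction α using Ordinal.induction with
  | _ α ih =>
    have hlub : ∀ γ ≤ α, ∀ y,
        IsLUB (Set.range fun β : Set.Iio γ => approx13 hstar g β.1 y)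
          (prev13 hstar g γ y) := by
      intro γ hγ y
      apply CompletePartialOrder.lubOfDirected
      rintro a ⟨⟨β₁, h₁⟩, rfl⟩ b ⟨⟨β₂, h₂⟩, rfl⟩
      rcases le_total β₁ β₂ with hle | hle
      · exact ⟨approx13 hstar g β₂ y, ⟨⟨β₂, h₂⟩, rfl⟩,
          ih β₂ (h₂.trans_le hγ) β₁ hle y, le_rfl⟩
      · exact ⟨approx13 hstar g β₁ y, ⟨⟨β₁, h₁⟩, rfl⟩,
          le_rfl, ih β₁ (h₁.trans_le hγ) β₂ hle y⟩
    intro β hβ x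
    rw [approx13_def, approx13_def]
    refine hmono x fun i => ?_
    refine (hlub β hβ _).2 fun b hb => ?_
    obtain ⟨⟨δ, hδ⟩, rfl⟩ := hb
    exact (hlub α le_rfl _).1 ⟨⟨δ, hδ.trans_le hβ⟩, rfl⟩

theorem isLUB_prev13 {hstar : S → (Fin m → B) → B} {g : Fin m → S → S}
    (hmono : ∀ x, Monotone (hstar x)) (α : Ordinal) (y : S) :
    IsLUB (Set.range fun β : Set.Iio α => approx13 hstar g β.1 y)
      (prev13 hstar g α y) := by
  apply CompletePartialOrder.lubOfDirected
  rintro a ⟨⟨β₁, h₁⟩, rfl⟩ b ⟨⟨β₂, h₂⟩, rfl⟩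
  rcases le_total β₁ β₂ with hle | hle
  · exact ⟨approx13 hstar g β₂ y, ⟨⟨β₂, h₂⟩, rfl⟩,
      approx13_mono hmono β₂ β₁ hle y, le_rfl⟩
  · exact ⟨approx13 hstar g β₁ y, ⟨⟨β₁, h₁⟩, rfl⟩,
      le_rfl, approx13_mono hmono β₁ β₂ hle y⟩

theorem directedOn_prev13 {hstar : S → (Fin m → B) → B} {g : Fin m → S → S}
    (hmono : ∀ x, Monotone (hstar x)) (α : Ordinal) (y : S) :
    DirectedOn (· ≤ ·) (Set.range fun β : Set.Iio α => approx13 hstar g β.1 y) := by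
  rintro a ⟨⟨β₁, h₁⟩, rfl⟩ b ⟨⟨β₂, h₂⟩, rfl⟩
  rcases le_total β₁ β₂ with hle | hle
  · exact ⟨approx13 hstar g β₂ y, ⟨⟨β₂, h₂⟩, rfl⟩,
      approx13_mono hmono β₂ β₁ hle y, le_rfl⟩
  · exact ⟨approx13 hstar g β₁ y, ⟨⟨β₁, h₁⟩, rfl⟩,
      le_rfl, approx13_mono hmono β₁ β₂ hle y⟩

end Aux13

/-- The paper's corecursion theorem over a sized CPO `⟨B, ζ, s, cut⟩`: if every
`x`-local prefix production function `η x` strictly increases the minimum size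
(below `ζ`), then the corecursive system `f x = h x (fun i => f (g i x))` has
exactly one solution with values in the maximal elements of `B`. -/
theorem stmt13 {B : Type*} [CompletePartialOrder B] [OrderBot B]
    (ζ : Ordinal) (s : B → Ordinal) (cut : Ordinal → B → B)
    -- sized CPO axioms
    (hsle : ∀ b : B, s b ≤ ζ)
    (hsurj : ∀ α : Ordinal, α ≤ ζ → ∃ b : B, s b = α)
    (hcontinuous : ∀ D : Set B, D.Nonempty → DirectedOn (· ≤ ·) D →
      ∀ lub : B, IsLUB D lub → IsLUB (s '' D) (s lub))
    (hmaxiff : ∀ b : B, s b = ζ ↔ IsMax b)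
    (hcutmono : ∀ (α β : Ordinal) (b b' : B), α ≤ β → b ≤ b' → cut α b ≤ cut β b')
    (hcut1 : ∀ (α : Ordinal) (b : B), α ≤ ζ → α < s b → s (cut α b) = α)
    (hcut2 : ∀ (α : Ordinal) (b : B), s b ≤ α → cut α b = b)
    -- the corecursive data
    {S : Type*} [Nonempty S] (m : ℕ)
    (h : S → (Fin m → {b : B // IsMax b}) → {b : B // IsMax b})
    (g : Fin m → S → S)
    (hη : ∀ x : S, ∃ η : (Fin m → Ordinal) → Ordinal,
      (∃ hstar : (Fin m → B) → B,
        Monotone hstar ∧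
        (∀ b : Fin m → B, (∀ i, IsMax (b i)) → IsMax (hstar b)) ∧
        (∀ b : Fin m → {b : B // IsMax b},
          hstar (fun i => (b i : B)) = (h x b : B)) ∧
        (∀ b : Fin m → B, s (hstar b) = η (fun i => s (b i)))) ∧
      (∀ α : Fin m → Ordinal, (∀ i, α i ≤ ζ) → (∃ k, α k < ζ) →
        (⨅ i, α i) < η α)) :
    ∃! f : S → {b : B // IsMax b}, ∀ x : S, f x = h x (fun i => f (g i x)) := by
  classical
  choose η hrest hgrow using hη
  choose hstar hmono hmaxpres hagree hsizes using hrest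
  set F : Ordinal → S → B := approx13 hstar g with hF
  have Fdef : ∀ (α : Ordinal) (x : S), F α x = hstar x fun i => prev13 hstar g α (g i x) :=
    approx13_def hstar g
  have Fmono : ∀ α β : Ordinal, β ≤ α → ∀ x, F β x ≤ F α x := approx13_mono hmono
  have hlub : ∀ (α : Ordinal) (y : S),
      IsLUB (Set.range fun β : Set.Iio α => F β.1 y) (prev13 hstar g α y) :=
    isLUB_prev13 hmono
  -- the size of the `α`-th approximation is at least `min (α+1) ζ`
  have hsizeall : ∀ (α : Ordinal) (x : S), min (α + 1) ζ ≤ s (F α x) := by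
    intro α
    induction α using Ordinal.induction with
    | _ α ih =>
      intro x
      have hprevsize : ∀ y, min α ζ ≤ s (prev13 hstar g α y) := by
        intro y
        rcases le_or_gt (min α ζ) 0 with h0 | hpos
        · exact h0.trans zero_le
        · have hα0 : 0 < α := lt_of_lt_of_le hpos (min_le_left _ _)
          have hne : (Set.range fun β : Set.Iio α => F β.1 y).Nonempty :=
            ⟨_, ⟨⟨0, hα0⟩, rfl⟩⟩
          have hcl := hcontinuous _ hne (directedOn_prev13 hmono α y) _ (hlub α y)
          refine le_of_forall_lt fun c hc => ?_
          have hcα : c < α := lt_of_lt_of_le hc (min_le_left _ _)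
          have hcζ : c < ζ := lt_of_lt_of_le hc (min_le_right _ _)
          have h1 : min (c + 1) ζ ≤ s (F c y) := ih c hcα y
          rw [min_eq_left (Order.add_one_le_iff.mpr hcζ)] at h1
          have h2 : s (F c y) ≤ s (prev13 hstar g α y) :=
            hcl.1 ⟨F c y, ⟨⟨c, hcα⟩, rfl⟩, rfl⟩
          exact lt_of_lt_of_le (Order.lt_add_one_iff.mpr le_rfl) (h1.trans h2)
      by_cases hall : ∀ i, s (prev13 hstar g α (g i x)) = ζ
      · have hmaxi : ∀ i, IsMax (prev13 hstar g α (g i x)) :=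
          fun i => (hmaxiff _).mp (hall i)
        have hmx : IsMax (F α x) := by
          rw [Fdef]; exact hmaxpres x _ hmaxi
        rw [(hmaxiff _).mpr hmx]
        exact min_le_right _ _
      · push_neg at hall
        obtain ⟨k, hk⟩ := hall
        have hkζ : s (prev13 hstar g α (g k x)) < ζ := lt_of_le_of_ne (hsle _) hk
        have : Nonempty (Fin m) := ⟨k⟩
        have hinf : min α ζ ≤ ⨅ i, s (prev13 hstar g α (g i x)) :=
          le_ciInf fun i => hprevsize _
        have hgr := hgrow x (fun i => s (prev13 hstar g α (g i x)))
          (fun i => hsle _) ⟨k, hkζ⟩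
        have hlt : min α ζ < s (F α x) := by
          rw [Fdef, hsizes]
          exact lt_of_le_of_lt hinf hgr
        have hαζ : α < ζ := by
          by_contra hcon
          push_neg at hcon
          have : min α ζ = ζ := min_eq_right hcon
          rw [this] at hinf
          exact absurd (le_trans hinf (ciInf_le (OrderBot.bddBelow _) k)) (not_le.mpr hkζ)
        rw [min_eq_left hαζ.le] at hlt
        exact le_trans (min_le_left _ _) (Order.add_one_le_iff.mpr hlt)
  -- at stage `ζ` everything is maximal
  have hmaxζ : ∀ x, IsMax (F ζ x) := by
    intro x
    refine (hmaxiff _).mp (le_antisymm (hsle _) ?_)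
    have := hsizeall ζ x
    rwa [min_eq_right ((Order.lt_add_one_iff.mpr le_rfl).le)] at this
  -- stage `ζ` is a fixed point
  have hζsucc : (ζ : Ordinal) < ζ + 1 := Order.lt_add_one_iff.mpr le_rfl
  have hprevζ : ∀ y, prev13 hstar g (ζ + 1) y = F ζ y := by
    intro y
    have hub : F ζ y ≤ prev13 hstar g (ζ + 1) y :=
      (hlub (ζ + 1) y).1 ⟨⟨ζ, hζsucc⟩, rfl⟩
    exact le_antisymm (hmaxζ y hub) hub
  have hfix : ∀ x, F ζ x = hstar x fun i => F ζ (g i x) := by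
    intro x
    have h1 : F ζ x ≤ F (ζ + 1) x := Fmono _ _ ((Order.lt_add_one_iff.mpr le_rfl).le) x
    have h2 : F (ζ + 1) x = hstar x fun i => F ζ (g i x) := by
      rw [Fdef]
      congr 1
      funext i
      exact hprevζ (g i x)
    rw [← h2]
    exact le_antisymm h1 (hmaxζ x h1)
  refine ⟨fun x => ⟨F ζ x, hmaxζ x⟩, ?_, ?_⟩
  · intro x
    apply Subtype.ext
    exact (hfix x).trans (hagree x fun i => ⟨F ζ (g i x), hmaxζ (g i x)⟩)
  · intro f' hf'
    have key : ∀ (α : Ordinal) (x : S), F α x ≤ (f' x : B) := by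
      intro α
      induction α using Ordinal.induction with
      | _ α ih =>
        intro x
        have hf'x : (f' x : B) = hstar x fun i => (f' (g i x) : B) := by
          rw [hf' x]
          exact (hagree x _).symm
        rw [Fdef, hf'x]
        refine hmono x fun i => ?_
        refine (hlub α _).2 fun b hb => ?_
        obtain ⟨⟨δ, hδ⟩, rfl⟩ := hb
        exact ih δ hδ _
    funext x
    apply Subtype.ext
    exact le_antisymm (hmaxζ x (key ζ x)) (key ζ x)
end
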